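/- liminf_{k→∞} Γ(k)/k = 3/2, where Γ(k) is the largest odd positive integer m such that the length-km prefix of the Thue-Morse word is not a k-anti-power. -/

import Mathlib

/-!
Write `t n` for the parity of the binary digit sum of `n`, so that the Thue–Morse word is
`t 0 t 1 t 2 ⋯`. Since `t (2n) = t n` and `t (2n + 1) = 1 - t n`, the relation
`t (x + 2^v N) = t x` is equivalent to `t (⌊x / 2^v⌋ + N) = t ⌊x / 2^v⌋`. For odd `N` the latter
cannot hold on four consecutive `x` (halving once more would give a cube `aaa`), so the former
holds on at most `3 · 2^v` consecutive `x`. Two equal blocks of odd length `m` at distance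
`2^v N`, `N` odd, give such a relation on `m` consecutive positions; hence `m ≤ 3 · 2^v` with
`2^v < k`, and `Γ(2^(n+1)) ≤ 3 · 2^n`.

Conversely, the same descent exhibits, for `2^v ≤ k - 3 < 2^(v+1)`, equal blocks of odd length
`2^(v+1) - 1` and of odd length `3 · 2^v - 3` or `3 · 2^v - 9` among the first `k`, so that
`Γ(k) ≥ 3k/2 - 12`.
-/

open Filter

/-- The Thue-Morse word, indexed from 1: `tm i` is the parity of the number of
1's in the binary expansion of `i - 1`. -/
def tm (i : ℕ) : ℕ := (Nat.digits 2 (i - 1)).sum % 2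

/-- The factor `t_a t_{a+1} ⋯ t_b` of the Thue-Morse word. -/
def seg (a b : ℕ) : List ℕ := (List.range (b + 1 - a)).map (fun j => tm (a + j))

/-- The `i`-th block of length `m` of the Thue-Morse word (blocks indexed from 0):
`t_{im+1} ⋯ t_{(i+1)m}`. -/
def block (m i : ℕ) : List ℕ := seg (i * m + 1) ((i + 1) * m)

/-- The prefix of the Thue-Morse word of length `k * m` is a `k`-anti-power:
its `k` consecutive blocks of length `m` are pairwise distinct. -/
def IsAntiPowerPrefix (m k : ℕ) : Prop :=
  ∀ i j, i < k → j < k → i ≠ j → block m i ≠ block m j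

/-- `w` is a factor (contiguous substring) of the Thue-Morse word. -/
def IsFactor (w : List ℕ) : Prop :=
  ∃ a : ℕ, w = (List.range w.length).map (fun j => tm (a + 1 + j))

/-- `δ(m) = ⌈log₂ (m/3)⌉` (a nonnegative integer for `m ≥ 2`). -/
noncomputable def delta (m : ℕ) : ℕ := (⌈Real.logb 2 ((m : ℝ) / 3)⌉).toNat

/-- `⌈log₂ m⌉`. -/
noncomputable def ell (m : ℕ) : ℕ := (⌈Real.logb 2 (m : ℝ)⌉).toNat

/-- `K(m)`: the smallest `k` such that the prefix of the Thue-Morse word of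
length `k * m` is not a `k`-anti-power. -/
noncomputable def Kap (m : ℕ) : ℕ := sInf {k | ¬ IsAntiPowerPrefix m k}

/-- `γ(k)`: the smallest odd positive integer `m` such that the prefix of the
Thue-Morse word of length `k * m` is a `k`-anti-power. -/
noncomputable def gam (k : ℕ) : ℕ := sInf {m | Odd m ∧ IsAntiPowerPrefix m k}

/-- `Γ(k)`: the largest odd positive integer `m` such that the prefix of the
Thue-Morse word of length `k * m` is not a `k`-anti-power. -/
noncomputable def Gam (k : ℕ) : ℕ := sSup {m | Odd m ∧ ¬ IsAntiPowerPrefix m k}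

/-- The Thue-Morse morphism `μ` (0 ↦ 01, 1 ↦ 10) on words. -/
def mu (w : List ℕ) : List ℕ := w.flatMap (fun a => if a = 0 then [0, 1] else [1, 0])

open Topology

/-- The Thue–Morse sequence indexed from `0`: `tm (n + 1) = thueMorse n`. -/
def thueMorse (n : ℕ) : ℕ := (Nat.digits 2 n).sum % 2

lemma tm_succ (n : ℕ) : tm (n + 1) = thueMorse n := by
  simp [tm, thueMorse]

lemma thueMorse_lt_two (n : ℕ) : thueMorse n < 2 :=
  Nat.mod_lt _ two_pos

lemma thueMorse_two_mul (n : ℕ) : thueMorse (2 * n) = thueMorse n := by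
  rcases Nat.eq_zero_or_pos n with rfl | hn
  · rfl
  · simp [thueMorse, Nat.digits_def' one_lt_two (by omega : 0 < 2 * n)]

lemma thueMorse_two_mul_add_one (n : ℕ) : thueMorse (2 * n + 1) = (thueMorse n + 1) % 2 := by
  simp only [thueMorse, Nat.digits_def' one_lt_two (by omega : 0 < 2 * n + 1), List.sum_cons,
    show (2 * n + 1) % 2 = 1 by omega, show (2 * n + 1) / 2 = n by omega]
  omega

lemma thueMorse_two_pow_add {t c : ℕ} (hc : c < 2 ^ t) :
    thueMorse (2 ^ t + c) = (thueMorse c + 1) % 2 := by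
  induction t generalizing c with
  | zero =>
    obtain rfl : c = 0 := by omega
    rfl
  | succ t ih =>
    rw [pow_succ] at hc ⊢
    obtain ⟨z, rfl | rfl⟩ := Nat.even_or_odd' c
    · rw [show 2 ^ t * 2 + 2 * z = 2 * (2 ^ t + z) by ring, thueMorse_two_mul, thueMorse_two_mul,
        ih (by omega)]
    · rw [show 2 ^ t * 2 + (2 * z + 1) = 2 * (2 ^ t + z) + 1 by ring, thueMorse_two_mul_add_one,
        thueMorse_two_mul_add_one, ih (by omega)]

lemma thueMorse_two_pow (t : ℕ) : thueMorse (2 ^ t) = 1 :=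
  thueMorse_two_pow_add (c := 0) (by positivity)

/-- `2 ^ t - 1 - c` is the bitwise complement of `c` in `t` binary digits. -/
lemma thueMorse_two_pow_sub_one_sub {t c : ℕ} (hc : c < 2 ^ t) :
    thueMorse (2 ^ t - 1 - c) = (t + thueMorse c) % 2 := by
  induction t generalizing c with
  | zero =>
    obtain rfl : c = 0 := by omega
    rfl
  | succ t ih =>
    rw [pow_succ] at hc ⊢
    obtain ⟨z, rfl | rfl⟩ := Nat.even_or_odd' c
    · rw [show 2 ^ t * 2 - 1 - 2 * z = 2 * (2 ^ t - 1 - z) + 1 by omega,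
        thueMorse_two_mul_add_one, thueMorse_two_mul, ih (by omega)]
      omega
    · rw [show 2 ^ t * 2 - 1 - (2 * z + 1) = 2 * (2 ^ t - 1 - z) by omega,
        thueMorse_two_mul, thueMorse_two_mul_add_one, ih (by omega)]
      omega

lemma thueMorse_cube_free (n : ℕ) :
    ¬ (thueMorse n = thueMorse (n + 1) ∧ thueMorse (n + 1) = thueMorse (n + 2)) := by
  obtain ⟨z, rfl | rfl⟩ := Nat.even_or_odd' n
  · rw [show 2 * z + 2 = 2 * (z + 1) by ring,
      thueMorse_two_mul, thueMorse_two_mul_add_one, thueMorse_two_mul]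
    omega
  · rw [show 2 * z + 1 + 1 = 2 * (z + 1) by ring, show 2 * z + 1 + 2 = 2 * (z + 1) + 1 by ring,
      thueMorse_two_mul_add_one, thueMorse_two_mul, thueMorse_two_mul_add_one]
    omega

lemma thueMorse_add_two_mul_eq_iff (N x : ℕ) :
    thueMorse (x + 2 * N) = thueMorse x ↔ thueMorse (x / 2 + N) = thueMorse (x / 2) := by
  obtain ⟨z, rfl | rfl⟩ := Nat.even_or_odd' x
  · rw [show 2 * z + 2 * N = 2 * (z + N) by ring, thueMorse_two_mul, thueMorse_two_mul,
      Nat.mul_div_cancel_left _ two_pos]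
  · rw [show 2 * z + 1 + 2 * N = 2 * (z + N) + 1 by ring, thueMorse_two_mul_add_one,
      thueMorse_two_mul_add_one, show (2 * z + 1) / 2 = z by omega]
    have := thueMorse_lt_two (z + N)
    have := thueMorse_lt_two z
    omega

lemma thueMorse_add_two_pow_mul_eq_iff (v N x : ℕ) :
    thueMorse (x + 2 ^ v * N) = thueMorse x ↔
      thueMorse (x / 2 ^ v + N) = thueMorse (x / 2 ^ v) := by
  induction v generalizing N x with
  | zero => simp
  | succ v ih =>
    rw [pow_succ, mul_assoc, ih, thueMorse_add_two_mul_eq_iff, Nat.div_div_eq_div_mul]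

lemma not_forall_lt_four_thueMorse_add_eq {a b : ℕ} (hab : a % 2 ≠ b % 2) :
    ¬ ∀ t < 4, thueMorse (a + t) = thueMorse (b + t) := by
  wlog ha : a % 2 = 0 generalizing a b
  · exact fun h => this hab.symm (by omega) fun t ht => (h t ht).symm
  intro h
  obtain ⟨y, rfl⟩ : ∃ y, a = 2 * y := ⟨a / 2, by omega⟩
  obtain ⟨z, rfl⟩ : ∃ z, b = 2 * z + 1 := ⟨b / 2, by omega⟩
  have h0 := h 0 (by norm_num)
  have h1 := h 1 (by norm_num)
  have h2 := h 2 (by norm_num)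
  have h3 := h 3 (by norm_num)
  rw [add_zero, thueMorse_two_mul, thueMorse_two_mul_add_one] at h0
  rw [show 2 * z + 1 + 1 = 2 * (z + 1) by ring, thueMorse_two_mul, thueMorse_two_mul_add_one] at h1
  rw [show 2 * y + 2 = 2 * (y + 1) by ring, show 2 * z + 1 + 2 = 2 * (z + 1) + 1 by ring,
    thueMorse_two_mul, thueMorse_two_mul_add_one] at h2
  rw [show 2 * y + 3 = 2 * (y + 1) + 1 by ring, show 2 * z + 1 + 3 = 2 * (z + 2) by ring,
    thueMorse_two_mul, thueMorse_two_mul_add_one] at h3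
  have := thueMorse_lt_two z
  have := thueMorse_lt_two (z + 1)
  have := thueMorse_lt_two (z + 2)
  exact thueMorse_cube_free z ⟨by omega, by omega⟩

lemma le_three_mul_two_pow_of_thueMorse_add_eq {v N a L : ℕ} (hN : Odd N)
    (h : ∀ t < L, thueMorse (a + t + 2 ^ v * N) = thueMorse (a + t)) : L ≤ 3 * 2 ^ v := by
  by_contra! hL
  refine not_forall_lt_four_thueMorse_add_eq (a := a / 2 ^ v + N) (b := a / 2 ^ v)
    (by obtain ⟨M, rfl⟩ := hN; omega) fun u hu => ?_
  have hu' : 2 ^ v * u < L :=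
    (Nat.mul_le_mul_left _ (by omega : u ≤ 3)).trans_lt (by rwa [mul_comm] at hL)
  have := (thueMorse_add_two_pow_mul_eq_iff v N (a + 2 ^ v * u)).1 (h _ hu')
  rwa [Nat.add_mul_div_left _ _ (by positivity), add_right_comm] at this

lemma block_eq_map (m i : ℕ) : block m i = (List.range m).map (fun t => thueMorse (i * m + t)) := by
  simp only [block, seg, show (i + 1) * m + 1 - (i * m + 1) = m by rw [add_one_mul]; omega]
  exact List.map_congr_left fun t _ => by rw [add_right_comm, tm_succ]

lemma block_eq_block_iff {m i j : ℕ} :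
    block m i = block m j ↔ ∀ t < m, thueMorse (i * m + t) = thueMorse (j * m + t) := by
  simp [block_eq_map, List.map_inj_left]

lemma exists_two_pow_le_sub_of_block_eq {m i j : ℕ} (hm : Odd m) (hij : i < j)
    (h : block m i = block m j) : ∃ v, 2 ^ v ≤ j - i ∧ m ≤ 3 * 2 ^ v := by
  obtain ⟨v, e, he, hji⟩ := Nat.exists_eq_two_pow_mul_odd (n := j - i) (by omega)
  refine ⟨v, hji ▸ Nat.le_mul_of_pos_right _ he.pos,
    le_three_mul_two_pow_of_thueMorse_add_eq (a := i * m) (he.mul hm) fun t ht => ?_⟩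
  rw [block_eq_block_iff.1 h t ht, show j = i + 2 ^ v * e by omega]
  ring_nf

lemma exists_two_pow_lt_of_not_isAntiPowerPrefix {m k : ℕ} (hm : Odd m)
    (h : ¬ IsAntiPowerPrefix m k) : ∃ v, 2 ^ v < k ∧ m ≤ 3 * 2 ^ v := by
  simp only [IsAntiPowerPrefix, not_forall, not_not] at h
  obtain ⟨i, j, hi, hj, hij, h⟩ := h
  rcases hij.lt_or_gt with hlt | hlt
  · obtain ⟨v, hv, hmv⟩ := exists_two_pow_le_sub_of_block_eq hm hlt h
    exact ⟨v, by omega, hmv⟩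
  · obtain ⟨v, hv, hmv⟩ := exists_two_pow_le_sub_of_block_eq hm hlt h.symm
    exact ⟨v, by omega, hmv⟩

lemma three_mul_mem_upperBounds (k : ℕ) :
    3 * k ∈ upperBounds {m | Odd m ∧ ¬ IsAntiPowerPrefix m k} := fun m ⟨hm, h⟩ => by
  obtain ⟨v, hv, hmv⟩ := exists_two_pow_lt_of_not_isAntiPowerPrefix hm h
  omega

lemma le_Gam_of_block_eq {m k i j : ℕ} (hm : Odd m) (hij : i ≠ j) (hi : i < k) (hj : j < k)
    (h : block m i = block m j) : m ≤ Gam k :=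
  le_csSup ⟨_, three_mul_mem_upperBounds k⟩ ⟨hm, fun hap => hap i j hi hj hij h⟩

lemma Gam_two_pow_succ_le (n : ℕ) : Gam (2 ^ (n + 1)) ≤ 3 * 2 ^ n := by
  refine csSup_le' fun m ⟨hm, h⟩ => ?_
  obtain ⟨v, hv, hmv⟩ := exists_two_pow_lt_of_not_isAntiPowerPrefix hm h
  have hvn : v ≤ n := Nat.lt_succ_iff.1 ((Nat.pow_lt_pow_iff_right one_lt_two).1 hv)
  exact hmv.trans (Nat.mul_le_mul_left _ (Nat.pow_le_pow_right two_pos hvn))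

/-- Every position of block `i` lies in `[p · 2^v, (p + 3) · 2^v)`, so the shift by `2^v · m`
from block `i` to block `i + 2^v` descends to the shift by `m` on `p, p + 1, p + 2`. -/
lemma block_eq_block_add_two_pow {m i v p : ℕ} (h₁ : p * 2 ^ v ≤ i * m)
    (h₂ : (i + 1) * m ≤ (p + 3) * 2 ^ v)
    (hp : ∀ u < 3, thueMorse (p + u + m) = thueMorse (p + u)) :
    block m i = block m (i + 2 ^ v) := by
  refine block_eq_block_iff.2 fun t ht => ?_
  rw [show (i + 2 ^ v) * m + t = i * m + t + 2 ^ v * m by ring, eq_comm,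
    thueMorse_add_two_pow_mul_eq_iff]
  have hlo : p ≤ (i * m + t) / 2 ^ v := (Nat.le_div_iff_mul_le (by positivity)).2 (by omega)
  have hhi : (i * m + t) / 2 ^ v < p + 3 :=
    (Nat.div_lt_iff_lt_mul (by positivity)).2 (by rw [add_one_mul] at h₂; omega)
  have := hp _ (Nat.sub_lt_left_of_lt_add hlo hhi)
  rwa [Nat.add_sub_cancel' hlo] at this

lemma block_two_eq_block_two_add_two_pow {v : ℕ} (hv : 2 ≤ v) :
    block (2 ^ (v + 1) - 1) 2 = block (2 ^ (v + 1) - 1) (2 + 2 ^ v) := by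
  have : 2 ^ 2 ≤ 2 ^ v := Nat.pow_le_pow_right two_pos hv
  refine block_eq_block_add_two_pow (p := 3) (by rw [pow_succ]; omega) (by rw [pow_succ]; omega)
    fun u hu => ?_
  rw [show 3 + u + (2 ^ (v + 1) - 1) = 2 ^ (v + 1) + (u + 2) by rw [pow_succ]; omega,
    thueMorse_two_pow_add (by rw [pow_succ]; omega)]
  interval_cases u <;> decide

lemma two_pow_mod_three (v : ℕ) : 2 ^ v % 3 = 1 + v % 2 := by
  induction v with
  | zero => rfl
  | succ v ih =>
    rw [pow_succ]
    rcases Nat.mod_two_eq_zero_or_one v with h | h <;> omega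

lemma thueMorse_two_pow_add_two_sub_one_sub_eq {v a b : ℕ} (ha : a < 2 ^ (v + 2))
    (hb : b < 2 ^ v) (hab : thueMorse a = thueMorse b) :
    thueMorse (2 ^ (v + 2) - 1 - a) = thueMorse (2 ^ v - 1 - b) := by
  rw [thueMorse_two_pow_sub_one_sub ha, thueMorse_two_pow_sub_one_sub hb, hab]
  omega

lemma block_eq_of_two_pow_eq_three_mul_add_one {v w : ℕ} (hw₀ : 1 ≤ w)
    (hw : 2 ^ v = 3 * w + 1) : block (9 * w) w = block (9 * w) (w + 2 ^ v) := by
  have hv : v % 2 = 0 := by have := two_pow_mod_three v; omega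
  have h4 : 2 ^ (v + 2) = 2 ^ v * 4 := pow_add 2 v 2
  refine block_eq_block_add_two_pow (p := 3 * w - 1) ?_ ?_ fun u hu => ?_
  · rw [hw]; zify [show 1 ≤ 3 * w by omega]; nlinarith
  · rw [hw, show 3 * w - 1 + 3 = 3 * w + 2 by omega]; nlinarith
  interval_cases u
  · rw [show 3 * w - 1 + 0 + 9 * w = 2 ^ (v + 2) - 1 - 4 by omega,
      show 3 * w - 1 + 0 = 2 ^ v - 1 - 1 by omega]
    exact thueMorse_two_pow_add_two_sub_one_sub_eq (by omega) (by omega) (by decide)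
  · rw [show 3 * w - 1 + 1 + 9 * w = 2 ^ (v + 2) - 1 - 3 by omega,
      show 3 * w - 1 + 1 = 2 ^ v - 1 - 0 by omega]
    exact thueMorse_two_pow_add_two_sub_one_sub_eq (by omega) (by omega) (by decide)
  · rw [show 3 * w - 1 + 2 + 9 * w = 2 ^ (v + 2) - 1 - 2 by omega,
      show 3 * w - 1 + 2 = 2 ^ v by omega, thueMorse_two_pow_sub_one_sub (by omega),
      thueMorse_two_pow, show thueMorse 2 = 1 by decide]
    omega

lemma block_eq_of_two_pow_eq_three_mul_add_two {v w : ℕ} (hw₀ : 2 ≤ w)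
    (hw : 2 ^ v = 3 * w + 2) : block (9 * w - 3) w = block (9 * w - 3) (w + 2 ^ v) := by
  have h4 : 2 ^ (v + 2) = 2 ^ v * 4 := pow_add 2 v 2
  refine block_eq_block_add_two_pow (p := 3 * w - 3) ?_ ?_ fun u hu => ?_
  · rw [hw]; zify [show 3 ≤ 3 * w by omega, show 3 ≤ 9 * w by omega]; nlinarith
  · rw [hw, show 3 * w - 3 + 3 = 3 * w by omega]; zify [show 3 ≤ 9 * w by omega]; nlinarith
  rw [show 3 * w - 3 + u + (9 * w - 3) = 2 ^ (v + 2) - 1 - (13 - u) by omega,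
    show 3 * w - 3 + u = 2 ^ v - 1 - (4 - u) by omega]
  exact thueMorse_two_pow_add_two_sub_one_sub_eq (by omega) (by omega)
    (by interval_cases u <;> decide)

lemma exists_block_eq_block_add_two_pow {v : ℕ} (hv : 3 ≤ v) :
    ∃ m i, Odd m ∧ 3 * 2 ^ v ≤ m + 9 ∧ 3 * i ≤ 2 ^ v ∧ block m i = block m (i + 2 ^ v) := by
  have h8 : 2 ^ 3 ≤ 2 ^ v := Nat.pow_le_pow_right two_pos hv
  have hev : 2 ^ v % 2 = 0 := Nat.even_iff.1 (Nat.even_pow.2 ⟨even_two, by omega⟩)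
  have hmod := two_pow_mod_three v
  rcases Nat.mod_two_eq_zero_or_one v with hv2 | hv2
  · obtain ⟨w, hw⟩ : ∃ w, 2 ^ v = 3 * w + 1 := ⟨2 ^ v / 3, by omega⟩
    exact ⟨9 * w, w, Nat.odd_iff.2 (by omega), by omega, by omega,
      block_eq_of_two_pow_eq_three_mul_add_one (by omega) hw⟩
  · obtain ⟨w, hw⟩ : ∃ w, 2 ^ v = 3 * w + 2 := ⟨2 ^ v / 3, by omega⟩
    exact ⟨9 * w - 3, w, Nat.odd_iff.2 (by omega), by omega, by omega,
      block_eq_of_two_pow_eq_three_mul_add_two (by omega) hw⟩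

lemma three_mul_le_two_mul_Gam_add {k : ℕ} (hk : 11 ≤ k) : 3 * k ≤ 2 * Gam k + 24 := by
  set v := Nat.log 2 (k - 3)
  have hlo : 2 ^ v ≤ k - 3 := Nat.pow_log_le_self 2 (by omega)
  have hhi : k - 3 < 2 ^ v * 2 := pow_succ 2 v ▸ Nat.lt_pow_succ_log_self one_lt_two _
  have hv : 3 ≤ v := Nat.le_log_of_pow_le one_lt_two (by norm_num; omega)
  have hA : 2 ^ (v + 1) - 1 ≤ Gam k :=
    le_Gam_of_block_eq (Nat.odd_iff.2 (by rw [pow_succ]; omega)) (by omega) (by omega)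
      (by omega) (block_two_eq_block_two_add_two_pow (by omega))
  rw [pow_succ] at hA
  obtain ⟨m, i, hm, hm9, hi, h⟩ := exists_block_eq_block_add_two_pow hv
  rcases lt_or_ge (i + 2 ^ v) k with hik | hki
  · have hB := le_Gam_of_block_eq hm (by omega) (by omega) hik h
    omega
  · omega

theorem stmt13 :
    Filter.liminf (fun k : ℕ => (Gam k : ℝ) / k) Filter.atTop = 3 / 2 := by
  have frequently_le : ∃ᶠ k : ℕ in atTop, (Gam k : ℝ) / k ≤ 3 / 2 := by
    refine frequently_atTop.2 fun N => ⟨2 ^ (N + 1), ?_, ?_⟩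
    · exact Nat.lt_two_pow_self.le.trans (Nat.pow_le_pow_right two_pos N.le_succ)
    · rw [div_le_iff₀ (by positivity)]
      have : (Gam (2 ^ (N + 1)) : ℝ) ≤ 3 * 2 ^ N := by exact_mod_cast Gam_two_pow_succ_le N
      push_cast
      linarith [pow_succ (2 : ℝ) N]
  have eventually_ge : ∀ᶠ k : ℕ in atTop, 3 / 2 - 12 / (k : ℝ) ≤ Gam k / k := by
    filter_upwards [eventually_ge_atTop 11] with k hk
    have : (3 * k : ℝ) ≤ 2 * Gam k + 24 := by exact_mod_cast three_mul_le_two_mul_Gam_add hk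
    rw [sub_le_iff_le_add, ← add_div, le_div_iff₀ (by positivity)]
    linarith
  have tendsto : Tendsto (fun k : ℕ => 3 / 2 - 12 / (k : ℝ)) atTop (𝓝 (3 / 2)) := by
    simpa using tendsto_const_nhds.sub (tendsto_const_div_atTop_nhds_zero_nat (12 : ℝ))
  refine le_antisymm (liminf_le_of_frequently_le frequently_le
    (isBoundedUnder_of ⟨0, fun k => by positivity⟩)) ?_
  calc (3 / 2 : ℝ) = liminf (fun k : ℕ => 3 / 2 - 12 / (k : ℝ)) atTop := tendsto.liminf_eq.symm
    _ ≤ _ := liminf_le_liminf eventually_ge tendsto.isBoundedUnder_ge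
      (IsCoboundedUnder.of_frequently_le frequently_le)
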